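/- Let c_n := (4n−1)!!/(24ⁿ n!), the n-th coefficient of the partition function of zero-dimensional φ⁴-theory. Then for every R ∈ ℕ, c_n − (1/(√2 · π)) · Σ_{k=0}^{R−1} (−1)^k c_k (2/3)^{n−k} Γ(n−k) = O( (2/3)ⁿ Γ(n−R) ) as n → ∞. (The two symmetric dominant saddle points of the action −x²/2 + x⁴/4! at x = ±√6, both with value −3/2, contribute equally, producing the prefactor 1/(√2 π).) -/

import Mathlib

/-!
With `b n = (3/2)^n c_n`, the reflection formula `Γ(1/4)Γ(3/4) = √2 π` and the recurrence
`16 (n+1) b (n+1) = (4n+1)(4n+3) b n` give `√2 π b n = a n := Γ(n+1/4)Γ(n+3/4)/Γ(n+1)`, so the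
claim becomes `a n - S_R n = O(Γ(n-R))` for `S_R n = ∑_{k<R} (-1)^k b k Γ(n-k)`.

The partial sums `S_R` satisfy the recurrence of `a` up to one term of size `Γ(n+1-R)`, so the
increments of the relative error `(a - S_R)/a` are bounded by a multiple of `u n - u (n+1)`,
where `u n = Γ(n+1-R)/Γ(n+1)`. Log-convexity of `Γ` gives `n/(n+3/4) Γ(n) ≤ a n ≤ Γ(n)`; hence
for `R ≥ 1` the relative error tends to `0`, and summing its increments from `n` to `∞` bounds it
by a multiple of `u n`.
-/

/-- `c_n = (4n-1)!!/(24^n n!)`, the `n`-th coefficient of the partition function of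
zero-dimensional φ⁴-theory, with `(4n-1)!! = (4n)!/(2^{2n}(2n)!)`. -/
noncomputable def cphi4 (n : ℕ) : ℝ :=
  ((4 * n).factorial : ℝ) / (2 ^ (2 * n) * ((2 * n).factorial : ℝ)) /
    (24 ^ n * (n.factorial : ℝ))

open Real Filter Topology Asymptotics Finset

namespace Real

theorem Gamma_comb_mul_Gamma_comb_le {x y a : ℝ} (hx : 0 < x) (hy : 0 < y) (ha₀ : 0 ≤ a)
    (ha₁ : a ≤ 1) :
    Gamma (a * x + (1 - a) * y) * Gamma ((1 - a) * x + a * y) ≤ Gamma x * Gamma y := by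
  have hb₀ : 0 ≤ 1 - a := sub_nonneg.2 ha₁
  have h₁ := convexOn_log_Gamma.2 hx hy ha₀ hb₀ (by ring)
  have h₂ := convexOn_log_Gamma.2 hx hy hb₀ ha₀ (by ring)
  have p₁ : 0 < Gamma (a * x + (1 - a) * y) :=
    Gamma_pos_of_pos (convex_Ioi (0 : ℝ) hx hy ha₀ hb₀ (by ring))
  have p₂ : 0 < Gamma ((1 - a) * x + a * y) :=
    Gamma_pos_of_pos (convex_Ioi (0 : ℝ) hx hy hb₀ ha₀ (by ring))
  have px := Gamma_pos_of_pos hx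
  have py := Gamma_pos_of_pos hy
  simp only [Function.comp_apply, smul_eq_mul] at h₁ h₂
  rw [← log_le_log_iff (mul_pos p₁ p₂) (mul_pos px py), log_mul p₁.ne' p₂.ne',
    log_mul px.ne' py.ne']
  linarith

theorem Gamma_add_mul_Gamma_add_one_sub_le {x s : ℝ} (hx : 0 < x) (hs₀ : 0 ≤ s) (hs₁ : s ≤ 1) :
    Gamma (x + s) * Gamma (x + 1 - s) ≤ Gamma x * Gamma (x + 1) := by
  have h := Gamma_comb_mul_Gamma_comb_le hx (by linarith : 0 < x + 1) (sub_nonneg.2 hs₁)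
    (by linarith : 1 - s ≤ 1)
  rwa [show (1 - s) * x + (1 - (1 - s)) * (x + 1) = x + s by ring,
    show (1 - (1 - s)) * x + (1 - s) * (x + 1) = x + 1 - s by ring] at h

theorem Gamma_add_one_sq_le {x s : ℝ} (hx : 0 < x) (hs₀ : 0 ≤ s) (hs₁ : s ≤ 1) :
    Gamma (x + 1) ^ 2 ≤ (x + 1 - s) * (Gamma (x + s) * Gamma (x + 1 - s)) := by
  have h := Gamma_comb_mul_Gamma_comb_le (x := x + s) (y := x + 1 - s + 1) (a := 1 / 2)
    (by linarith) (by linarith) (by norm_num) (by norm_num)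
  rw [show 1 / 2 * (x + s) + (1 - 1 / 2) * (x + 1 - s + 1) = x + 1 by ring,
    show (1 - 1 / 2) * (x + s) + 1 / 2 * (x + 1 - s + 1) = x + 1 by ring,
    Gamma_add_one (by linarith : x + 1 - s ≠ 0)] at h
  linear_combination h

theorem tendsto_Gamma_sub_succ_div_Gamma (j : ℕ) :
    Tendsto (fun x => Gamma (x - (j + 1)) / Gamma x) atTop (𝓝 0) := by
  have step : ∀ i : ℕ, ∀ᶠ x in atTop,
      Gamma (x - (i + 1)) / Gamma x = Gamma (x - i) / Gamma x * (x - (i + 1))⁻¹ := by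
    intro i
    filter_upwards [eventually_gt_atTop ((i : ℝ) + 1)] with x hx
    rw [show x - i = x - (i + 1) + 1 by ring, Gamma_add_one (by linarith)]
    field_simp [show x - (i + 1) ≠ 0 by linarith]
  have hinv : ∀ i : ℕ, Tendsto (fun x : ℝ => (x - (i + 1))⁻¹) atTop (𝓝 0) := fun i =>
    tendsto_inv_atTop_zero.comp (tendsto_atTop_add_const_right _ _ tendsto_id)
  induction j with
  | zero =>
    refine (hinv 0).congr' ?_
    filter_upwards [step 0, eventually_gt_atTop 0] with x hx hx0
    rw [hx, Nat.cast_zero, sub_zero, div_self (Gamma_pos_of_pos hx0).ne', one_mul]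
  | succ j ih =>
    have := ih.mul (hinv (j + 1))
    rw [zero_mul] at this
    refine this.congr' ?_
    filter_upwards [step (j + 1)] with x hx
    rw [hx]
    push_cast
    ring_nf

end Real

noncomputable def bphi4 (n : ℕ) : ℝ := (3 / 2) ^ n * cphi4 n

lemma bphi4_zero : bphi4 0 = 1 := by simp [bphi4, cphi4]

lemma bphi4_pos (n : ℕ) : 0 < bphi4 n := by
  unfold bphi4 cphi4; positivity

lemma bphi4_succ (n : ℕ) :
    16 * ((n : ℝ) + 1) * bphi4 (n + 1) = (4 * n + 1) * (4 * n + 3) * bphi4 n := by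
  simp only [bphi4, cphi4, show 4 * (n + 1) = 4 * n + 3 + 1 by ring,
    show 2 * (n + 1) = 2 * n + 1 + 1 by ring, Nat.factorial_succ, pow_succ]
  push_cast
  field_simp
  ring

noncomputable def phi4Gamma (x : ℝ) : ℝ := Gamma (x + 1 / 4) * Gamma (x + 3 / 4) / Gamma (x + 1)

lemma phi4Gamma_pos {x : ℝ} (hx : 0 ≤ x) : 0 < phi4Gamma x := by
  unfold phi4Gamma
  have := Gamma_pos_of_pos (by linarith : 0 < x + 1 / 4)
  have := Gamma_pos_of_pos (by linarith : 0 < x + 3 / 4)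
  have := Gamma_pos_of_pos (by linarith : 0 < x + 1)
  positivity

lemma phi4Gamma_add_one {x : ℝ} (hx : 0 ≤ x) :
    16 * (x + 1) * phi4Gamma (x + 1) = (4 * x + 1) * (4 * x + 3) * phi4Gamma x := by
  unfold phi4Gamma
  rw [show x + 1 + 1 / 4 = x + 1 / 4 + 1 by ring, show x + 1 + 3 / 4 = x + 3 / 4 + 1 by ring,
    Gamma_add_one (by linarith), Gamma_add_one (by linarith), Gamma_add_one (by linarith)]
  have := Gamma_pos_of_pos (by linarith : 0 < x + 1)
  field_simp
  ring

lemma phi4Gamma_zero : phi4Gamma 0 = √2 * π := by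
  have h := Gamma_mul_Gamma_one_sub (1 / 4)
  rw [show π * (1 / 4) = π / 4 by ring, sin_pi_div_four] at h
  simp only [phi4Gamma, zero_add, Gamma_one, div_one]
  rw [show (3 / 4 : ℝ) = 1 - 1 / 4 by norm_num, h]
  field_simp
  rw [sq_sqrt zero_le_two]

lemma phi4Gamma_natCast (n : ℕ) : phi4Gamma n = √2 * π * bphi4 n := by
  induction n with
  | zero => rw [Nat.cast_zero, phi4Gamma_zero, bphi4_zero, mul_one]
  | succ n ih =>
    have h := phi4Gamma_add_one (Nat.cast_nonneg n)
    have hb := bphi4_succ n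
    push_cast
    have : (16 : ℝ) * (n + 1) ≠ 0 := by positivity
    apply mul_left_cancel₀ this
    linear_combination h - (√2 * π) * hb + ((4 * (n : ℝ) + 1) * (4 * n + 3)) * ih

lemma phi4Gamma_le_Gamma {x : ℝ} (hx : 0 < x) : phi4Gamma x ≤ Gamma x := by
  have h := Gamma_add_mul_Gamma_add_one_sub_le (s := 1 / 4) hx (by norm_num) (by norm_num)
  rw [show x + 1 - 1 / 4 = x + 3 / 4 by ring] at h
  exact div_le_of_le_mul₀ (Gamma_pos_of_pos (by linarith)).le (Gamma_pos_of_pos hx).le h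

lemma Gamma_add_one_le_phi4Gamma {x : ℝ} (hx : 0 < x) :
    Gamma (x + 1) ≤ (x + 3 / 4) * phi4Gamma x := by
  have h := Gamma_add_one_sq_le (s := 1 / 4) hx (by norm_num) (by norm_num)
  rw [show x + 1 - 1 / 4 = x + 3 / 4 by ring] at h
  have hG := Gamma_pos_of_pos (by linarith : 0 < x + 1)
  rw [phi4Gamma, mul_div_assoc', le_div_iff₀ hG, ← sq]
  exact h

lemma tendsto_phi4Gamma_div_Gamma :
    Tendsto (fun n : ℕ => phi4Gamma n / Gamma n) atTop (𝓝 1) := by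
  refine tendsto_of_tendsto_of_tendsto_of_le_of_le' (tendsto_natCast_div_add_atTop (3 / 4 : ℝ))
    tendsto_const_nhds ?_ ?_
  all_goals
    filter_upwards [eventually_gt_atTop 0] with n hn
    have hx : (0 : ℝ) < n := Nat.cast_pos.2 hn
    have hG := Gamma_pos_of_pos hx
  · rw [div_le_div_iff₀ (by positivity) hG, ← Gamma_add_one hx.ne',
      mul_comm (phi4Gamma _)]
    exact Gamma_add_one_le_phi4Gamma hx
  · exact div_le_one_of_le₀ (phi4Gamma_le_Gamma hx) hG.le

theorem norm_le_of_tendsto_zero_of_norm_sub_le {E : Type*} [SeminormedAddCommGroup E]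
    {f : ℕ → E} {v : ℕ → ℝ} {n₀ : ℕ} (hf : Tendsto f atTop (𝓝 0)) (hv : ∀ n ≥ n₀, 0 ≤ v n)
    (hstep : ∀ n ≥ n₀, ‖f (n + 1) - f n‖ ≤ v n - v (n + 1)) {n : ℕ} (hn : n₀ ≤ n) :
    ‖f n‖ ≤ v n := by
  have hsum : ∀ N ≥ n, ‖f N - f n‖ ≤ v n - v N := by
    intro N hN
    induction N, hN using Nat.le_induction with
    | base => simp
    | succ N hN ih =>
      calc ‖f (N + 1) - f n‖ ≤ ‖f (N + 1) - f N‖ + ‖f N - f n‖ :=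
            norm_sub_le_norm_sub_add_norm_sub _ _ _
        _ ≤ (v N - v (N + 1)) + (v n - v N) := add_le_add (hstep N (hn.trans hN)) ih
        _ = v n - v (N + 1) := by ring
  have hlim : Tendsto (fun N => ‖f N - f n‖) atTop (𝓝 ‖f n‖) := by
    simpa using (hf.sub_const (f n)).norm
  refine le_of_tendsto hlim ?_
  filter_upwards [eventually_ge_atTop n] with N hN
  linarith [hsum N hN, hv N (hn.trans hN)]

noncomputable def phi4AsymSum (R : ℕ) (x : ℝ) : ℝ :=
  ∑ k ∈ range R, (-1) ^ k * bphi4 k * Gamma (x - k)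

lemma phi4AsymSum_add_one (R : ℕ) {x : ℝ} (hx : (R : ℝ) ≤ x) :
    16 * (x + 1) * phi4AsymSum R (x + 1)
      = (4 * x + 1) * (4 * x + 3) * phi4AsymSum R x
        + (-1) ^ R * (16 * R) * bphi4 R * Gamma (x + 1 - R) := by
  induction R with
  | zero => simp [phi4AsymSum]
  | succ R ih =>
    push_cast at hx ⊢
    have hG : Gamma (x + 1 - R) = (x - R) * Gamma (x - R) := by
      rw [show x + 1 - R = x - R + 1 by ring, Gamma_add_one (by linarith)]
    simp only [phi4AsymSum, sum_range_succ] at ih ⊢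
    rw [show x + 1 - (R + 1) = x - R by ring]
    linear_combination ih (by linarith) + ((-1) ^ R * bphi4 R * (16 * x + 16 + 16 * R)) * hG
      + ((-1) ^ R * Gamma (x - R)) * bphi4_succ R

lemma tendsto_phi4AsymSum_div_Gamma {R : ℕ} (hR : 0 < R) :
    Tendsto (fun n : ℕ => phi4AsymSum R n / Gamma n) atTop (𝓝 1) := by
  obtain ⟨R, rfl⟩ := Nat.exists_eq_succ_of_ne_zero hR.ne'
  have hterms : Tendsto (fun n : ℕ => ∑ k ∈ range R,
      (-1) ^ (k + 1) * bphi4 (k + 1) * (Gamma (n - (k + 1)) / Gamma n)) atTop (𝓝 0) := by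
    simpa using tendsto_finsetSum (range R) fun k _ =>
      ((tendsto_Gamma_sub_succ_div_Gamma k).comp tendsto_natCast_atTop_atTop).const_mul
        ((-1) ^ (k + 1) * bphi4 (k + 1))
  have h := hterms.const_add 1
  rw [add_zero] at h
  refine h.congr' ?_
  filter_upwards [eventually_gt_atTop 0] with n hn
  have hG := (Gamma_pos_of_pos (Nat.cast_pos.2 hn : (0 : ℝ) < n)).ne'
  simp only [phi4AsymSum, sum_range_succ', add_div, sum_div, mul_div_assoc]
  push_cast
  rw [pow_zero, bphi4_zero, sub_zero, one_mul, one_mul, div_self hG, add_comm]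

noncomputable def phi4RelRemainder (R : ℕ) (x : ℝ) : ℝ :=
  (phi4Gamma x - phi4AsymSum R x) / phi4Gamma x

lemma phi4RelRemainder_add_one_sub (R : ℕ) {x : ℝ} (hx : (R : ℝ) ≤ x) :
    phi4RelRemainder R (x + 1) - phi4RelRemainder R x
      = (-1) ^ (R + 1) * (R * bphi4 R * Gamma (x + 1 - R) / ((x + 1) * phi4Gamma (x + 1))) := by
  have hx₀ : 0 ≤ x := (Nat.cast_nonneg R).trans hx
  have ha := (phi4Gamma_pos hx₀).ne'
  have ha' := (phi4Gamma_pos (by linarith : 0 ≤ x + 1)).ne'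
  have hrec := phi4Gamma_add_one hx₀
  have hS := phi4AsymSum_add_one R hx
  unfold phi4RelRemainder
  field_simp
  linear_combination (phi4AsymSum R x * hrec - phi4Gamma x * hS) / 16

lemma abs_phi4RelRemainder_add_one_sub_le (R : ℕ) {x : ℝ} (hx : (R : ℝ) ≤ x) :
    |phi4RelRemainder R (x + 1) - phi4RelRemainder R x|
      ≤ 7 / 4 * bphi4 R *
        (Gamma (x + 1 - R) / Gamma (x + 1) - Gamma (x + 1 + 1 - R) / Gamma (x + 1 + 1)) := by
  have hx₀ : 0 ≤ x := (Nat.cast_nonneg R).trans hx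
  have hxR : 0 < x + 1 - R := by linarith
  have hG := Gamma_pos_of_pos hxR
  have hG₁ := Gamma_pos_of_pos (by linarith : 0 < x + 1)
  have hG₂ := Gamma_pos_of_pos (by linarith : 0 < x + 1 + 1)
  have ha := phi4Gamma_pos (by linarith : 0 ≤ x + 1)
  have hb := bphi4_pos R
  have hu : Gamma (x + 1 - R) / Gamma (x + 1) - Gamma (x + 1 + 1 - R) / Gamma (x + 1 + 1)
      = R * Gamma (x + 1 - R) / Gamma (x + 1 + 1) := by
    rw [show x + 1 + 1 - R = x + 1 - R + 1 by ring, Gamma_add_one hxR.ne',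
      Gamma_add_one (by linarith : x + 1 ≠ 0)]
    field_simp
    ring
  have hlow : Gamma (x + 1 + 1) ≤ 7 / 4 * ((x + 1) * phi4Gamma (x + 1)) :=
    (Gamma_add_one_le_phi4Gamma (by linarith)).trans (by nlinarith)
  rw [phi4RelRemainder_add_one_sub R hx, abs_mul, abs_pow, abs_neg, abs_one, one_pow, one_mul,
    abs_of_nonneg (by positivity), hu, div_le_iff₀ (by positivity)]
  calc R * bphi4 R * Gamma (x + 1 - R)
      ≤ R * bphi4 R * Gamma (x + 1 - R) *
          (7 / 4 * ((x + 1) * phi4Gamma (x + 1)) / Gamma (x + 1 + 1)) :=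
        le_mul_of_one_le_right (by positivity) ((one_le_div hG₂).2 hlow)
    _ = _ := by field_simp

lemma tendsto_phi4RelRemainder {R : ℕ} (hR : 0 < R) :
    Tendsto (fun n : ℕ => phi4RelRemainder R n) atTop (𝓝 0) := by
  have h := ((tendsto_phi4AsymSum_div_Gamma hR).div tendsto_phi4Gamma_div_Gamma
    one_ne_zero).const_sub 1
  rw [div_one, sub_self] at h
  refine h.congr' ?_
  filter_upwards [eventually_gt_atTop 0] with n hn
  have hG := (Gamma_pos_of_pos (Nat.cast_pos.2 hn : (0 : ℝ) < n)).ne'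
  have ha := (phi4Gamma_pos (Nat.cast_nonneg n)).ne'
  simp only [Pi.div_apply, phi4RelRemainder]
  field_simp

lemma abs_phi4RelRemainder_le {R : ℕ} (hR : 0 < R) {n : ℕ} (hn : R ≤ n) :
    |phi4RelRemainder R n| ≤ 7 / 4 * bphi4 R * (Gamma (n + 1 - R) / Gamma (n + 1)) := by
  refine norm_le_of_tendsto_zero_of_norm_sub_le (f := fun m : ℕ => phi4RelRemainder R m)
    (v := fun m : ℕ => 7 / 4 * bphi4 R * (Gamma (m + 1 - R) / Gamma (m + 1)))
    (tendsto_phi4RelRemainder hR) (fun m hm => ?_) (fun m hm => ?_) hn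
  · have := Gamma_pos_of_pos (by linarith [(Nat.cast_le (α := ℝ)).2 hm] : (0 : ℝ) < m + 1 - R)
    have := Gamma_pos_of_pos (by positivity : (0 : ℝ) < m + 1)
    have := bphi4_pos R
    positivity
  · push_cast
    rw [Real.norm_eq_abs, ← mul_sub]
    exact abs_phi4RelRemainder_add_one_sub_le R (Nat.cast_le.2 hm)

lemma abs_phi4Remainder_le {R : ℕ} (hR : 0 < R) {n : ℕ} (hn : R < n) :
    |phi4Gamma n - phi4AsymSum R n| ≤ 7 / 4 * bphi4 R * Gamma (n - R) := by
  have hRn : (R : ℝ) + 1 ≤ n := by exact_mod_cast hn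
  have hn₀ : (0 : ℝ) < n := by linarith [(Nat.cast_nonneg R : (0 : ℝ) ≤ R)]
  have ha := phi4Gamma_pos hn₀.le
  have hG := Gamma_pos_of_pos hn₀
  have hnR : (0 : ℝ) < n - R := by linarith
  have hGR := Gamma_pos_of_pos hnR
  have hb := bphi4_pos R
  have hrel := abs_phi4RelRemainder_le hR hn.le
  rw [phi4RelRemainder, abs_div, abs_of_pos ha, div_le_iff₀ ha,
    show (n : ℝ) + 1 - R = n - R + 1 by ring, Gamma_add_one hnR.ne',
    Gamma_add_one hn₀.ne'] at hrel
  calc |phi4Gamma n - phi4AsymSum R n|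
      ≤ 7 / 4 * bphi4 R * ((n - R) * Gamma (n - R) / (n * Gamma n)) * phi4Gamma n := hrel
    _ ≤ 7 / 4 * bphi4 R * ((n - R) * Gamma (n - R) / (n * Gamma n)) * Gamma n := by
        gcongr
        exact phi4Gamma_le_Gamma hn₀
    _ = 7 / 4 * bphi4 R * ((n - R) / n) * Gamma (n - R) := by field_simp
    _ ≤ 7 / 4 * bphi4 R * 1 * Gamma (n - R) := by
        gcongr
        exact div_le_one_of_le₀ (by linarith [(Nat.cast_nonneg R : (0 : ℝ) ≤ R)]) hn₀.le
    _ = _ := by ring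

lemma isBigO_phi4Remainder (R : ℕ) :
    (fun n : ℕ => phi4Gamma n - phi4AsymSum R n) =O[atTop] fun n : ℕ => Gamma (n - R) := by
  rcases R.eq_zero_or_pos with rfl | hR
  · refine IsBigO.of_bound 1 ?_
    filter_upwards [eventually_gt_atTop 0] with n hn
    have hn₀ : (0 : ℝ) < n := Nat.cast_pos.2 hn
    simp only [phi4AsymSum, range_zero, sum_empty, sub_zero, Nat.cast_zero, one_mul,
      Real.norm_eq_abs, abs_of_pos (phi4Gamma_pos hn₀.le), abs_of_pos (Gamma_pos_of_pos hn₀)]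
    exact phi4Gamma_le_Gamma hn₀
  · refine IsBigO.of_bound (7 / 4 * bphi4 R) ?_
    filter_upwards [eventually_gt_atTop R] with n hn
    have hnR : (0 : ℝ) < n - R := sub_pos.2 (Nat.cast_lt.2 hn)
    rw [Real.norm_eq_abs, Real.norm_eq_abs, abs_of_pos (Gamma_pos_of_pos hnR)]
    exact abs_phi4Remainder_le hR hn

lemma cphi4_eq (n : ℕ) : cphi4 n = (2 / 3) ^ n * phi4Gamma n / (√2 * π) := by
  rw [phi4Gamma_natCast, bphi4]
  field_simp
  rw [mul_assoc, ← mul_pow]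
  norm_num

lemma zpow_sub_mul_cphi4 (n k : ℕ) :
    (2 / 3 : ℝ) ^ ((n : ℤ) - k) * cphi4 k = (2 / 3) ^ n * bphi4 k := by
  rw [zpow_sub₀ (by norm_num), zpow_natCast, zpow_natCast, bphi4, div_eq_mul_inv, ← inv_pow,
    inv_div]
  ring

/-- For every `R`,
`c_n - (1/(√2·π)) Σ_{k<R} (-1)^k c_k (2/3)^{n-k} Γ(n-k) = O((2/3)^n Γ(n-R))` as `n → ∞`. -/
theorem stmt8 (R : ℕ) :
    (fun n : ℕ => cphi4 n - 1 / (Real.sqrt 2 * Real.pi) *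
        ∑ k ∈ Finset.range R,
          (-1 : ℝ) ^ k * cphi4 k * (2 / 3 : ℝ) ^ ((n : ℤ) - (k : ℤ)) *
            Real.Gamma ((n : ℝ) - (k : ℝ)))
      =O[Filter.atTop] fun n : ℕ => (2 / 3 : ℝ) ^ n * Real.Gamma ((n : ℝ) - (R : ℝ)) := by
  refine (((isBigO_refl (fun n : ℕ => (2 / 3 : ℝ) ^ n) atTop).mul
    (isBigO_phi4Remainder R)).const_mul_left (1 / (√2 * π))).congr_left fun n => ?_
  have hsum : ∑ k ∈ range R, (-1) ^ k * cphi4 k * (2 / 3 : ℝ) ^ ((n : ℤ) - k) * Gamma (n - k)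
      = (2 / 3) ^ n * phi4AsymSum R n := by
    rw [phi4AsymSum, mul_sum]
    refine sum_congr rfl fun k _ => ?_
    linear_combination ((-1) ^ k * Gamma (n - k)) * zpow_sub_mul_cphi4 n k
  rw [cphi4_eq, hsum]
  ring
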